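/- arXiv:math/0202255 — 2 statements merged into one kernel-verified Lean document; each statement's English description precedes it below -/
import Mathlib

section
/- Let W ⊆ O(n) be a finite group acting irreducibly on ℝⁿ and L a one-dimensional W-invariant-orbit-generating subspace, i.e. the span of ⋃_{w ∈ W} w(L) equals ℝⁿ. Then there exists δ ∈ (0,1) such that for every r > 0 the ball B(0, δr) is contained in the convex hull of ⋃_{w ∈ W} w(L ∩ B(0,r)). -/
/-!
Let `S = ⋃_{w ∈ W} w(L ∩ B(0,1))`. It contains `0`, is symmetric and spans the space, so its
convex hull is a symmetric convex body; such a body has `0` in its interior (as the midpoint of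
`x` and `-x` for any interior point `x`), hence contains some ball `B(0, ε)`. Since
`r • S = ⋃_{w ∈ W} w(L ∩ B(0,r))` and taking convex hulls commutes with scaling,
`B(0, εr) ⊆ conv(r • S)` for every `r > 0`.
-/

open Metric Pointwise Set Submodule

section ConvexSymmetric

variable {E : Type*} [AddCommGroup E] [Module ℝ E] [TopologicalSpace E] [IsTopologicalAddGroup E]
  [ContinuousSMul ℝ E]

theorem Convex.zero_mem_interior_of_neg_eq {K : Set E} (hK : Convex ℝ K) (hneg : -K = K)
    (hint : (interior K).Nonempty) : (0 : E) ∈ interior K := by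
  obtain ⟨x, hx⟩ := hint
  have hnx : -x ∈ interior K := by
    rw [← hneg]
    exact ((Homeomorph.neg E).preimage_interior K).subset (by simpa using hx)
  simpa using hK.interior hx hnx (by norm_num : (0 : ℝ) ≤ 1 / 2) (by norm_num : (0 : ℝ) ≤ 1 / 2)
    (by norm_num)

end ConvexSymmetric

section FiniteDimensional

variable {E : Type*} [NormedAddCommGroup E] [NormedSpace ℝ E] [FiniteDimensional ℝ E]

theorem zero_mem_interior_convexHull_of_span_eq_top {S : Set E} (h0 : (0 : E) ∈ S)
    (hneg : -S = S) (hspan : span ℝ S = ⊤) : (0 : E) ∈ interior (convexHull ℝ S) := by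
  refine (convex_convexHull ℝ S).zero_mem_interior_of_neg_eq
    (by rw [← convexHull_neg, hneg]) ?_
  rw [interior_convexHull_nonempty_iff_affineSpan_eq_top, ← AffineSubspace.coe_eq_univ_iff,
    ← Set.insert_eq_of_mem h0, affineSpan_insert_zero, hspan, Submodule.top_coe]

theorem exists_closedBall_subset_convexHull_smul {S : Set E} (h0 : (0 : E) ∈ S)
    (hneg : -S = S) (hspan : span ℝ S = ⊤) :
    ∃ ε > 0, ∀ r : ℝ, 0 ≤ r → closedBall (0 : E) (ε * r) ⊆ convexHull ℝ (r • S) := by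
  obtain ⟨ε, hε, hball⟩ := nhds_basis_closedBall.mem_iff.mp
    (mem_interior_iff_mem_nhds.mp (zero_mem_interior_convexHull_of_span_eq_top h0 hneg hspan))
  refine ⟨ε, hε, fun r hr => ?_⟩
  have hscale : closedBall (0 : E) (ε * r) = r • closedBall 0 ε := by
    rw [smul_closedBall _ _ hε.le, smul_zero, Real.norm_of_nonneg hr, mul_comm]
  rw [hscale, convexHull_smul]
  exact smul_set_mono hball

end FiniteDimensional

section OrbitBall

variable {E : Type*} [NormedAddCommGroup E] [NormedSpace ℝ E]

theorem Submodule.span_inter_closedBall (L : Submodule ℝ E) {r : ℝ} (hr : 0 < r) :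
    span ℝ ((L : Set E) ∩ closedBall 0 r) = L := by
  refine le_antisymm (span_le.mpr inter_subset_left) fun x hx => ?_
  obtain rfl | hx0 := eq_or_ne x 0
  · exact zero_mem _
  have hc : 0 < r / ‖x‖ := div_pos hr (norm_pos_iff.mpr hx0)
  rw [← inv_smul_smul₀ hc.ne' x]
  refine smul_mem _ _ (subset_span ⟨L.smul_mem _ hx, ?_⟩)
  rw [mem_closedBall_zero_iff, norm_smul, Real.norm_of_nonneg hc.le,
    div_mul_cancel₀ _ (norm_ne_zero_iff.mpr hx0)]

def orbitBall (W : Set (E ≃ₗᵢ[ℝ] E)) (L : Submodule ℝ E) (r : ℝ) : Set E :=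
  ⋃ w ∈ W, (w : E → E) '' ((L : Set E) ∩ closedBall 0 r)

variable (W : Set (E ≃ₗᵢ[ℝ] E)) (L : Submodule ℝ E)

theorem zero_mem_orbitBall (hW : W.Nonempty) {r : ℝ} (hr : 0 ≤ r) : (0 : E) ∈ orbitBall W L r := by
  obtain ⟨w, hw⟩ := hW
  exact mem_biUnion hw ⟨0, ⟨L.zero_mem, mem_closedBall_self hr⟩, map_zero w⟩

theorem neg_orbitBall (r : ℝ) : -orbitBall W L r = orbitBall W L r := by
  have hsub : -orbitBall W L r ⊆ orbitBall W L r := by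
    intro x hx
    obtain ⟨w, hw, v, ⟨hvL, hvr⟩, hv⟩ := mem_iUnion₂.mp hx
    exact mem_biUnion hw ⟨-v, ⟨L.neg_mem hvL, by simpa using hvr⟩, by rw [map_neg, hv, neg_neg]⟩
  exact hsub.antisymm (Set.neg_subset.mp hsub)

theorem smul_orbitBall_one {r : ℝ} (hr : 0 < r) : r • orbitBall W L 1 = orbitBall W L r := by
  have hscale : r • ((L : Set E) ∩ closedBall 0 1) = (L : Set E) ∩ closedBall 0 r := by
    ext x
    rw [mem_smul_set_iff_inv_smul_mem₀ hr.ne', mem_inter_iff, mem_inter_iff, SetLike.mem_coe,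
      SetLike.mem_coe, L.smul_mem_iff (inv_ne_zero hr.ne'), mem_closedBall_zero_iff,
      mem_closedBall_zero_iff, norm_smul, norm_inv, Real.norm_of_nonneg hr.le, inv_mul_le_iff₀ hr,
      mul_one]
  simp only [orbitBall, smul_set_iUnion₂, ← image_smul_set, hscale]

theorem span_orbitBall {r : ℝ} (hr : 0 < r) :
    span ℝ (orbitBall W L r) = span ℝ (⋃ w ∈ W, (w : E → E) '' L) := by
  simp only [orbitBall, span_iUnion₂]
  congr! 2 with w
  rw [← LinearIsometryEquiv.coe_toLinearEquiv, ← LinearEquiv.coe_coe, span_image, span_image,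
    L.span_inter_closedBall hr, span_eq]

end OrbitBall

theorem stmt_3_general {n : ℕ}
    (W : Subgroup (EuclideanSpace ℝ (Fin n) ≃ₗᵢ[ℝ] EuclideanSpace ℝ (Fin n)))
    (L : Submodule ℝ (EuclideanSpace ℝ (Fin n)))
    (hspan : Submodule.span ℝ (⋃ w ∈ W, (w : EuclideanSpace ℝ (Fin n) →
      EuclideanSpace ℝ (Fin n)) '' (L : Set (EuclideanSpace ℝ (Fin n)))) = ⊤) :
    ∃ δ ∈ Set.Ioo (0:ℝ) 1, ∀ r > (0:ℝ),
      Metric.closedBall (0 : EuclideanSpace ℝ (Fin n)) (δ * r) ⊆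
        convexHull ℝ (⋃ w ∈ W, (w : EuclideanSpace ℝ (Fin n) →
          EuclideanSpace ℝ (Fin n)) '' ((L : Set (EuclideanSpace ℝ (Fin n))) ∩
            Metric.closedBall 0 r)) := by
  set W' : Set (EuclideanSpace ℝ (Fin n) ≃ₗᵢ[ℝ] EuclideanSpace ℝ (Fin n)) := ↑W
  have hspanS : span ℝ (orbitBall W' L 1) = ⊤ := (span_orbitBall W' L one_pos).trans hspan
  obtain ⟨ε, hε, hball⟩ := exists_closedBall_subset_convexHull_smul
    (zero_mem_orbitBall W' L ⟨1, W.one_mem⟩ zero_le_one) (neg_orbitBall W' L 1) hspanS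
  refine ⟨min ε (1 / 2), ⟨lt_min hε one_half_pos, (min_le_right _ _).trans_lt one_half_lt_one⟩,
    fun r hr => ?_⟩
  calc closedBall 0 (min ε (1 / 2) * r)
      ⊆ closedBall 0 (ε * r) := closedBall_subset_closedBall (by gcongr; exact min_le_left _ _)
    _ ⊆ convexHull ℝ (r • orbitBall W' L 1) := hball r hr.le
    _ = convexHull ℝ (orbitBall W' L r) := by rw [smul_orbitBall_one W' L hr]

/-- If a finite group `W` of linear isometries acts irreducibly on `ℝⁿ` and `L` is a
one-dimensional subspace whose `W`-orbit spans `ℝⁿ`, then there is `δ ∈ (0,1)` such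
that for every `r > 0` the ball `B(0, δ r)` is contained in the convex hull of
`⋃_{w ∈ W} w(L ∩ B(0,r))`. -/
theorem stmt_3 {n : ℕ}
    (W : Subgroup (EuclideanSpace ℝ (Fin n) ≃ₗᵢ[ℝ] EuclideanSpace ℝ (Fin n)))
    (hWfin : (W : Set (EuclideanSpace ℝ (Fin n) ≃ₗᵢ[ℝ] EuclideanSpace ℝ (Fin n))).Finite)
    (hirr : ∀ V : Submodule ℝ (EuclideanSpace ℝ (Fin n)),
      (∀ w ∈ W, ∀ x ∈ V, w x ∈ V) → V = ⊥ ∨ V = ⊤)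
    (L : Submodule ℝ (EuclideanSpace ℝ (Fin n)))
    (hL : Module.finrank ℝ L = 1)
    (hspan : Submodule.span ℝ (⋃ w ∈ W, (w : EuclideanSpace ℝ (Fin n) →
      EuclideanSpace ℝ (Fin n)) '' (L : Set (EuclideanSpace ℝ (Fin n)))) = ⊤) :
    ∃ δ ∈ Set.Ioo (0:ℝ) 1, ∀ r > (0:ℝ),
      Metric.closedBall (0 : EuclideanSpace ℝ (Fin n)) (δ * r) ⊆
        convexHull ℝ (⋃ w ∈ W, (w : EuclideanSpace ℝ (Fin n) →
          EuclideanSpace ℝ (Fin n)) '' ((L : Set (EuclideanSpace ℝ (Fin n))) ∩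
            Metric.closedBall 0 r)) :=
  stmt_3_general W L hspan
end

section
/- Let G(t) = (sinh t / t)² for t ≠ 0, G(0) = 1, and let f(t) = (3u(t))^{1/3} with u(t) = (sinh(2t)-2t)/(4t³) (u(0) = 1/3). Then f is positive and smooth on [0,∞) and satisfies f(t)²(f(t) + t f'(t)) = G(t) for all t ≥ 0. -/
open scoped ContDiff

namespace Stmt15Aux

noncomputable def hh : ℝ → ℝ := fun t => Real.sinh (2*t) - 2*t

noncomputable def uu : ℝ → ℝ := fun t =>
  if t = 0 then 1/3 else (Real.sinh (2*t) - 2*t) / (4*t^3)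

lemma uu_eq {t : ℝ} (ht : t ≠ 0) : uu t = hh t / (4*t^3) := by
  simp [uu, hh, if_neg ht]

lemma hh_hasDerivAt (t : ℝ) : HasDerivAt hh (2 * Real.cosh (2*t) - 2) t := by
  have h1 : HasDerivAt (fun s : ℝ => 2*s) 2 t := by
    simpa using (hasDerivAt_id t).const_mul 2
  have h2 : HasDerivAt (fun s : ℝ => Real.sinh (2*s)) (Real.cosh (2*t) * 2) t := by
    exact (Real.hasDerivAt_sinh (2*t)).comp t h1
  have h3 := h2.sub h1
  have : Real.cosh (2*t) * 2 - 2 = 2 * Real.cosh (2*t) - 2 := by ring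
  rw [this] at h3
  exact h3

lemma cosh2_hasDerivAt (t : ℝ) :
    HasDerivAt (fun s : ℝ => 2 * Real.cosh (2*s) - 2) (4 * Real.sinh (2*t)) t := by
  have h1 : HasDerivAt (fun s : ℝ => 2*s) 2 t := by
    simpa using (hasDerivAt_id t).const_mul 2
  have h2 : HasDerivAt (fun s : ℝ => Real.cosh (2*s)) (Real.sinh (2*t) * 2) t := by
    exact (Real.hasDerivAt_cosh (2*t)).comp t h1
  have h3 := (h2.const_mul 2).sub_const 2
  have : 2 * (Real.sinh (2*t) * 2) = 4 * Real.sinh (2*t) := by ring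
  rw [this] at h3
  exact h3

lemma sinh2_hasDerivAt (t : ℝ) :
    HasDerivAt (fun s : ℝ => 4 * Real.sinh (2*s)) (8 * Real.cosh (2*t)) t := by
  have h1 : HasDerivAt (fun s : ℝ => 2*s) 2 t := by
    simpa using (hasDerivAt_id t).const_mul 2
  have h2 : HasDerivAt (fun s : ℝ => Real.sinh (2*s)) (Real.cosh (2*t) * 2) t := by
    exact (Real.hasDerivAt_sinh (2*t)).comp t h1
  have h3 := h2.const_mul 4
  have : 4 * (Real.cosh (2*t) * 2) = 8 * Real.cosh (2*t) := by ring
  rw [this] at h3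
  exact h3

lemma deriv_hh : deriv hh = fun t => 2 * Real.cosh (2*t) - 2 :=
  funext fun t => (hh_hasDerivAt t).deriv

lemma iteratedDeriv_hh_two : iteratedDeriv 2 hh = fun t => 4 * Real.sinh (2*t) := by
  rw [iteratedDeriv_succ, iteratedDeriv_one, deriv_hh]
  exact funext fun t => (cosh2_hasDerivAt t).deriv

lemma iteratedDeriv_hh_three : iteratedDeriv 3 hh 0 = 8 := by
  rw [iteratedDeriv_succ, iteratedDeriv_hh_two]
  have := (sinh2_hasDerivAt 0).deriv
  rw [this]
  norm_num

lemma analyticAt_rsinh (x : ℝ) : AnalyticAt ℝ Real.sinh x := by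
  have h : Real.sinh = fun x : ℝ => (Real.exp x - Real.exp (-x)) / 2 :=
    funext Real.sinh_eq
  rw [h]
  have h1 : AnalyticAt ℝ (fun x : ℝ => Real.exp x) x := analyticAt_rexp
  have h2 : AnalyticAt ℝ (fun x : ℝ => Real.exp (-x)) x :=
    AnalyticAt.rexp (analyticAt_id.neg)
  have h3 : AnalyticAt ℝ (fun x : ℝ => Real.exp x - Real.exp (-x)) x := h1.sub h2
  have h4 : AnalyticAt ℝ (fun _ : ℝ => (2:ℝ)) x := analyticAt_const
  exact h3.div h4 (by norm_num)

lemma analyticAt_mul2 (x : ℝ) : AnalyticAt ℝ (fun t : ℝ => 2*t) x :=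
  analyticAt_const.mul analyticAt_id

lemma hh_analyticAt (x : ℝ) : AnalyticAt ℝ hh x := by
  have h1 : AnalyticAt ℝ (fun t : ℝ => Real.sinh (2*t)) x :=
    (analyticAt_rsinh (2*x)).comp (analyticAt_mul2 x)
  exact h1.sub (analyticAt_mul2 x)

lemma hh_zero : hh 0 = 0 := by simp [hh]

lemma uu_analyticAt_zero : AnalyticAt ℝ uu 0 := by
  obtain ⟨p, hp⟩ := hh_analyticAt 0
  obtain ⟨r, hr⟩ := hp
  have hp' : HasFPowerSeriesAt hh p 0 := ⟨r, hr⟩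
  have hcoeff : ∀ n, (Nat.factorial n : ℝ) * p.coeff n = iteratedDeriv n hh 0 := by
    intro n
    rw [iteratedDeriv_eq_iteratedFDeriv, ← hr.factorial_smul (1 : ℝ) n, nsmul_eq_mul]
    rfl
  have hc2 : p.coeff 2 = 0 := by
    have h2 := hcoeff 2
    rw [iteratedDeriv_hh_two] at h2
    simp at h2
    linarith
  have hc3 : p.coeff 3 = 4/3 := by
    have h3 := hcoeff 3
    rw [iteratedDeriv_hh_three] at h3
    norm_num [Nat.factorial] at h3
    linarith
  have hp1 : HasFPowerSeriesAt (dslope hh 0) p.fslope 0 :=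
    hp'.has_fpower_series_dslope_fslope
  have hp2 : HasFPowerSeriesAt (dslope (dslope hh 0) 0) p.fslope.fslope 0 :=
    hp1.has_fpower_series_dslope_fslope
  have hp3 : HasFPowerSeriesAt (dslope (dslope (dslope hh 0) 0) 0)
      p.fslope.fslope.fslope 0 :=
    hp2.has_fpower_series_dslope_fslope
  have hg1_0 : dslope hh 0 0 = 0 := by
    rw [dslope_same, (hh_hasDerivAt 0).deriv]
    norm_num
  have hg2_0 : dslope (dslope hh 0) 0 0 = 0 := by
    rw [dslope_same, hp1.deriv]
    have h : p.fslope.coeff 1 = p.coeff 2 := FormalMultilinearSeries.coeff_fslope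
    exact h.trans hc2
  have hg3_0 : dslope (dslope (dslope hh 0) 0) 0 0 = 4/3 := by
    rw [dslope_same, hp2.deriv]
    have h1 : p.fslope.fslope.coeff 1 = p.fslope.coeff 2 :=
      FormalMultilinearSeries.coeff_fslope
    have h2 : p.fslope.coeff 2 = p.coeff 3 := FormalMultilinearSeries.coeff_fslope
    exact (h1.trans h2).trans hc3
  have hufun : uu = fun t => dslope (dslope (dslope hh 0) 0) 0 t / 4 := by
    funext t
    by_cases ht : t = 0
    · subst ht
      rw [hg3_0]
      norm_num [uu]
    · rw [uu_eq ht, dslope_of_ne _ ht, slope_def_field, hg2_0,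
        dslope_of_ne _ ht, slope_def_field, hg1_0,
        dslope_of_ne _ ht, slope_def_field, hh_zero]
      field_simp
      ring
  rw [hufun]
  exact hp3.analyticAt.div analyticAt_const (by norm_num)

lemma uu_analyticAt (t : ℝ) : AnalyticAt ℝ uu t := by
  by_cases ht : t = 0
  · subst ht; exact uu_analyticAt_zero
  · have hden : AnalyticAt ℝ (fun s : ℝ => 4*s^3) t :=
      analyticAt_const.mul (analyticAt_id.pow 3)
    have h1 : AnalyticAt ℝ (fun s : ℝ => hh s / (4*s^3)) t :=
      (hh_analyticAt t).div hden (by positivity)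
    apply h1.congr
    filter_upwards [compl_singleton_mem_nhds ht] with s hs
    simp only [Set.mem_compl_iff, Set.mem_singleton_iff] at hs
    exact (uu_eq hs).symm

lemma uu_pos (t : ℝ) : 0 < uu t := by
  rcases lt_trichotomy t 0 with h | h | h
  · rw [uu_eq h.ne]
    apply div_pos_of_neg_of_neg
    · have h1 : -(2*t) < Real.sinh (-(2*t)) :=
        Real.self_lt_sinh_iff.mpr (by linarith)
      rw [Real.sinh_neg] at h1
      simp only [hh]
      linarith
    · nlinarith [sq_nonneg t, mul_pos (mul_pos (neg_pos.mpr h) (neg_pos.mpr h)) (neg_pos.mpr h)]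
  · subst h; norm_num [uu]
  · rw [uu_eq h.ne']
    apply div_pos
    · have h1 : 2*t < Real.sinh (2*t) := Real.self_lt_sinh_iff.mpr (by linarith)
      simp only [hh]
      linarith
    · positivity

lemma uu_zero : uu 0 = 1/3 := by norm_num [uu]

lemma uu_ode (t : ℝ) (ht : 0 < t) :
    3 * uu t + t * deriv uu t = (Real.sinh t / t)^2 := by
  have htne : t ≠ 0 := ht.ne'
  have hden : HasDerivAt (fun s : ℝ => 4*s^3) (12*t^2) t := by
    have h := (hasDerivAt_pow 3 t).const_mul 4
    refine h.congr_deriv ?_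
    push_cast
    ring
  have hnum : HasDerivAt (fun s : ℝ => Real.sinh (2*s) - 2*s) (2 * Real.cosh (2*t) - 2) t :=
    hh_hasDerivAt t
  have hv : HasDerivAt (fun s : ℝ => (Real.sinh (2*s) - 2*s)/(4*s^3))
      (((2 * Real.cosh (2*t) - 2)*(4*t^3) - (Real.sinh (2*t) - 2*t)*(12*t^2))/(4*t^3)^2) t :=
    hnum.div hden (by positivity)
  have hev : uu =ᶠ[nhds t] fun s : ℝ => (Real.sinh (2*s) - 2*s)/(4*s^3) := by
    filter_upwards [compl_singleton_mem_nhds htne] with s hs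
    simp only [Set.mem_compl_iff, Set.mem_singleton_iff] at hs
    simp [uu, if_neg hs]
  have hu : HasDerivAt uu
      (((2 * Real.cosh (2*t) - 2)*(4*t^3) - (Real.sinh (2*t) - 2*t)*(12*t^2))/(4*t^3)^2) t :=
    hv.congr_of_eventuallyEq hev
  rw [hu.deriv, uu_eq htne]
  have hcosh : Real.cosh (2*t) = 2*(Real.sinh t)^2 + 1 := by
    rw [Real.cosh_two_mul, Real.cosh_sq]; ring
  simp only [hh, hcosh]
  field_simp
  ring

lemma analyticAt_rlog {x : ℝ} (hx : 0 < x) : AnalyticAt ℝ Real.log x := by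
  have hc : AnalyticAt ℝ (fun t : ℝ => Complex.log (t : ℂ)) x := by
    have h1 : AnalyticAt ℂ Complex.log ((Complex.ofRealCLM : ℝ →L[ℝ] ℂ) x) :=
      analyticAt_clog (by exact Complex.ofReal_mem_slitPlane.mpr hx)
    exact h1.restrictScalars.comp (Complex.ofRealCLM.analyticAt x)
  have h2 : AnalyticAt ℝ (fun t : ℝ => (Complex.log (t : ℂ)).re) x :=
    (Complex.reCLM.analyticAt _).comp hc
  apply h2.congr
  exact Filter.Eventually.of_forall fun t => Complex.log_ofReal_re t

lemma key_alg (x d t : ℝ) (hx : 0 < x) :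
    (x ^ ((1:ℝ)/3))^2 * (x ^ ((1:ℝ)/3) + t * ((1/3 : ℝ) * x ^ ((1:ℝ)/3 - 1) * d))
      = x + t * d / 3 := by
  have hx3 : (x ^ ((1:ℝ)/3))^2 = x ^ ((2:ℝ)/3) := by
    rw [← Real.rpow_natCast (x ^ ((1:ℝ)/3)) 2, ← Real.rpow_mul hx.le]
    norm_num
  have e1 : x ^ ((2:ℝ)/3) * x ^ ((1:ℝ)/3) = x := by
    rw [← Real.rpow_add hx]
    norm_num
  have e2 : x ^ ((2:ℝ)/3) * x ^ ((1:ℝ)/3 - 1) = x⁻¹ * x := by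
    rw [← Real.rpow_add hx, inv_mul_cancel₀ hx.ne']
    norm_num
  rw [hx3]
  rw [inv_mul_cancel₀ hx.ne'] at e2
  linear_combination e1 + (t * d / 3) * e2

end Stmt15Aux

/-- With `G(t) = (sinh t / t)²`, `u(t) = (sinh(2t) - 2t)/(4t³)` (values `1`, `1/3` at `0`),
the function `f = (3u)^{1/3}` is positive and smooth on `[0,∞)` and satisfies the
Ricci-flatness ODE `f²(f + t f') = G(t)` for all `t ≥ 0`. -/
theorem stmt_15 :
    let G : ℝ → ℝ := fun t => if t = 0 then 1 else (Real.sinh t / t)^2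
    let u : ℝ → ℝ := fun t => if t = 0 then 1/3 else (Real.sinh (2*t) - 2*t) / (4*t^3)
    let f : ℝ → ℝ := fun t => (3 * u t) ^ ((1:ℝ)/3)
    (∀ t ∈ Set.Ici (0:ℝ), 0 < f t) ∧
    ContDiffOn ℝ (⊤ : ℕ∞) f (Set.Ici 0) ∧
    ∃ f' : ℝ → ℝ, ∀ t ∈ Set.Ici (0:ℝ),
      HasDerivWithinAt f (f' t) (Set.Ici 0) t ∧
      (f t)^2 * (f t + t * f' t) = G t := by
  intro G u f
  have hu : u = Stmt15Aux.uu := rfl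
  have hupos : ∀ t, 0 < 3 * u t := by
    intro t
    have := Stmt15Aux.uu_pos t
    rw [hu]
    linarith
  have huan : ∀ t, AnalyticAt ℝ u t := by
    intro t
    rw [hu]
    exact Stmt15Aux.uu_analyticAt t
  refine ⟨?_, ?_, ?_⟩
  · intro t _
    exact Real.rpow_pos_of_pos (hupos t) _
  · have hfe : f = fun s => Real.exp (Real.log (3 * u s) * ((1:ℝ)/3)) := by
      funext s
      exact Real.rpow_def_of_pos (hupos s) _
    have hf : ∀ t, AnalyticAt ℝ f t := by
      intro t
      rw [hfe]
      have h3u : AnalyticAt ℝ (fun s => 3 * u s) t := analyticAt_const.mul (huan t)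
      have hlog0 : AnalyticAt ℝ Real.log ((fun s => 3 * u s) t) :=
        Stmt15Aux.analyticAt_rlog (hupos t)
      have hlog : AnalyticAt ℝ (fun s => Real.log (3 * u s)) t :=
        AnalyticAt.comp (f := fun s => 3 * u s) (x := t) hlog0 h3u
      exact (hlog.mul analyticAt_const).rexp
    have : AnalyticOnNhd ℝ f Set.univ := fun x _ => hf x
    exact this.contDiff.contDiffOn
  · refine ⟨fun t => (1/3 : ℝ) * (3 * u t) ^ ((1:ℝ)/3 - 1) * (3 * deriv u t), ?_⟩
    intro t ht
    have hud : HasDerivAt u (deriv u t) t := ((huan t).differentiableAt).hasDerivAt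
    have h3 : HasDerivAt (fun s => 3 * u s) (3 * deriv u t) t := hud.const_mul 3
    have hrp : HasDerivAt (fun x : ℝ => x ^ ((1:ℝ)/3))
        (((1:ℝ)/3) * (3 * u t) ^ ((1:ℝ)/3 - 1)) (3 * u t) :=
      Real.hasDerivAt_rpow_const (Or.inl (hupos t).ne')
    have hfd : HasDerivAt f
        ((1/3 : ℝ) * (3 * u t) ^ ((1:ℝ)/3 - 1) * (3 * deriv u t)) t := by
      have := hrp.comp t h3
      exact this
    refine ⟨hfd.hasDerivWithinAt, ?_⟩
    show ((3*u t) ^ ((1:ℝ)/3))^2 * ((3*u t) ^ ((1:ℝ)/3)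
        + t * ((1/3 : ℝ) * (3 * u t) ^ ((1:ℝ)/3 - 1) * (3 * deriv u t))) = G t
    rw [Stmt15Aux.key_alg (3*u t) (3 * deriv u t) t (hupos t)]
    have h33 : 3 * u t + t * (3 * deriv u t) / 3 = 3 * u t + t * deriv u t := by ring
    rw [h33]
    rcases eq_or_lt_of_le (Set.mem_Ici.mp ht) with h0 | h0
    · have ht0 : t = 0 := h0.symm
      subst ht0
      have hu0 : u 0 = 1/3 := by rw [hu]; exact Stmt15Aux.uu_zero
      have hG0 : G 0 = 1 := by simp [G]
      rw [hu0, hG0]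
      ring
    · have hGt : G t = (Real.sinh t / t)^2 := by simp [G, h0.ne']
      rw [hGt, hu]
      exact Stmt15Aux.uu_ode t h0
end
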